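/- For integers q ≥ 2 and k ≥ 0, setting l_{q,k} = 1/(q(qk+q-1)), the interval I_{q,k} = [1/q + l_{q,k+1}, 1/q + l_{q,k}] has length l_{q,k} - l_{q,k+1} = q^2 · l_{q,k} · l_{q,k+1}, and its Minkowski measure is μ(I_{q,k}) = 2^{-q-k}. -/

import Mathlib

/-!
The right endpoint `1/q + l_{q,k} = (k+1)/(qk+q-1)` of `I_{q,k}` has continued fraction
`[0; q-1, 1, k]`: it is `M₁^(q-2) (M₂ (1/(k+1)))`, and `1/(k+1) = M₁^k 1`. The functional
equations therefore give `Q((k+1)/(qk+q-1)) = 2^(1-q) (1 + 2^(-k))`. Continuity of `Q` rules out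
atoms of `μ` in `(0,1]`, so `μ(I_{q,k})` is the increment of `Q` across it,
`2^(1-q) (2^(-k) - 2^(-k-1)) = 2^(-q-k)`.
-/

open Filter MeasureTheory Topology
open scoped ENNReal

/-- The paper's `l_{q,k}`. -/
noncomputable def ell (q k : ℕ) : ℝ := 1 / (q * ((q : ℝ) * k + q - 1))

section Ell

variable {q : ℕ}

theorem mul_add_sub_one_pos (hq : 2 ≤ q) (k : ℕ) : (0 : ℝ) < q * k + q - 1 := by
  have : (2 : ℝ) ≤ q := by exact_mod_cast hq
  nlinarith [k.cast_nonneg (α := ℝ)]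

theorem ell_pos (hq : 2 ≤ q) (k : ℕ) : 0 < ell q k := by
  have := mul_add_sub_one_pos hq k
  unfold ell
  positivity

theorem one_div_add_ell (hq : 2 ≤ q) (k : ℕ) :
    1 / (q : ℝ) + ell q k = ((k : ℝ) + 1) / (q * k + q - 1) := by
  have hD := (mul_add_sub_one_pos hq k).ne'
  have hq0 : (q : ℝ) ≠ 0 := by positivity
  rw [ell, div_add_div _ _ hq0 (mul_ne_zero hq0 hD),
    div_eq_div_iff (mul_ne_zero hq0 (mul_ne_zero hq0 hD)) hD]
  ring

theorem ell_sub_ell_succ (hq : 2 ≤ q) (k : ℕ) :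
    ell q k - ell q (k + 1) = (q : ℝ) ^ 2 * ell q k * ell q (k + 1) := by
  have hD := (mul_add_sub_one_pos hq k).ne'
  have hD' := (mul_add_sub_one_pos hq (k + 1)).ne'
  have hq0 : (q : ℝ) ≠ 0 := by positivity
  rw [ell, ell, show (q : ℝ) * (k + 1 : ℕ) + q - 1 = q * k + q - 1 + q by push_cast; ring] at *
  generalize (q : ℝ) * k + q - 1 = D at *
  field_simp
  ring

theorem ell_succ_le (hq : 2 ≤ q) (k : ℕ) : ell q (k + 1) ≤ ell q k := by
  rw [← sub_nonneg, ell_sub_ell_succ hq k]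
  exact (mul_pos (mul_pos (by positivity) (ell_pos hq k)) (ell_pos hq _)).le

theorem natCast_add_one_div_mem_Icc (hq : 2 ≤ q) (k : ℕ) :
    ((k : ℝ) + 1) / (q * k + q - 1) ∈ Set.Icc (0 : ℝ) 1 := by
  have hq' : (2 : ℝ) ≤ q := by exact_mod_cast hq
  have hk : (0 : ℝ) ≤ k := k.cast_nonneg
  exact ⟨div_nonneg (by positivity) (mul_add_sub_one_pos hq k).le,
    div_le_one_of_le₀ (by nlinarith) (mul_add_sub_one_pos hq k).le⟩

end Ell

theorem one_div_natCast_add_one_mem_Icc (n : ℕ) : 1 / ((n : ℝ) + 1) ∈ Set.Icc (0 : ℝ) 1 :=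
  ⟨by positivity, div_le_one_of_le₀ (by linarith [n.cast_nonneg (α := ℝ)]) (by positivity)⟩

theorem questionMark_one_div_natCast_add_one {Q : ℝ → ℝ} (hQ1 : Q 1 = 1)
    (hQM1 : ∀ x ∈ Set.Icc (0 : ℝ) 1, Q (x / (1 + x)) = Q x / 2) (n : ℕ) :
    Q (1 / ((n : ℝ) + 1)) = (1 / 2) ^ n := by
  induction n with
  | zero => simpa using hQ1
  | succ n ih =>
    have hM1 : 1 / ((n : ℝ) + 1 + 1) = 1 / ((n : ℝ) + 1) / (1 + 1 / ((n : ℝ) + 1)) := by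
      field_simp
    rw [Nat.cast_succ, hM1, hQM1 _ (one_div_natCast_add_one_mem_Icc n), ih, pow_succ]
    ring

theorem questionMark_div_natCast {Q : ℝ → ℝ} (hQ1 : Q 1 = 1)
    (hQM1 : ∀ x ∈ Set.Icc (0 : ℝ) 1, Q (x / (1 + x)) = Q x / 2)
    (hQM2 : ∀ x ∈ Set.Icc (0 : ℝ) 1, Q (1 / (2 - x)) = (Q x + 1) / 2)
    {q : ℕ} (hq : 2 ≤ q) (k : ℕ) :
    Q (((k : ℝ) + 1) / (q * k + q - 1)) = 2 * (1 / 2) ^ q * (1 + (1 / 2) ^ k) := by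
  induction q, hq using Nat.le_induction with
  | base =>
    have hM2 :
        ((k : ℝ) + 1) / ((2 : ℕ) * k + (2 : ℕ) - 1) = 1 / (2 - 1 / ((k : ℝ) + 1)) := by
      field_simp
      ring
    rw [hM2, hQM2 _ (one_div_natCast_add_one_mem_Icc k),
      questionMark_one_div_natCast_add_one hQ1 hQM1]
    ring
  | succ q hq ih =>
    have hD := (mul_add_sub_one_pos hq k).ne'
    have hM1 : ((k : ℝ) + 1) / ((q + 1 : ℕ) * k + (q + 1 : ℕ) - 1)
        = ((k : ℝ) + 1) / (q * k + q - 1) / (1 + ((k : ℝ) + 1) / (q * k + q - 1)) := by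
      rw [div_div, mul_one_add, mul_div_cancel₀ _ hD]
      push_cast
      ring
    rw [hM1, hQM1 _ (natCast_add_one_div_mem_Icc hq k), ih, pow_succ]
    ring

section Cdf

variable {μ : Measure ℝ} {Q : ℝ → ℝ}

theorem measure_Ioc_eq_ofReal_sub_ofReal
    (hdist : ∀ x ∈ Set.Icc (0 : ℝ) 1, μ (Set.Icc 0 x) = ENNReal.ofReal (Q x))
    {a b : ℝ} (ha : 0 ≤ a) (hab : a ≤ b) (hb : b ≤ 1) :
    μ (Set.Ioc a b) = ENNReal.ofReal (Q b) - ENNReal.ofReal (Q a) := by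
  have hunion : μ (Set.Icc 0 a) + μ (Set.Ioc a b) = μ (Set.Icc 0 b) := by
    rw [← measure_union ((Set.Iic_disjoint_Ioc le_rfl).mono_left Set.Icc_subset_Iic_self)
      measurableSet_Ioc, Set.Icc_union_Ioc_eq_Icc ha hab]
  rw [← hdist a ⟨ha, hab.trans hb⟩, ← hdist b ⟨ha.trans hab, hb⟩]
  refine ENNReal.eq_sub_of_add_eq ?_ (by rwa [add_comm])
  rw [hdist a ⟨ha, hab.trans hb⟩]
  exact ENNReal.ofReal_ne_top

theorem measure_singleton_eq_zero_of_continuousWithinAt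
    (hdist : ∀ x ∈ Set.Icc (0 : ℝ) 1, μ (Set.Icc 0 x) = ENNReal.ofReal (Q x))
    {a : ℝ} (hQa : ContinuousWithinAt Q (Set.Icc 0 1) a) (ha : 0 < a) (ha1 : a ≤ 1) :
    μ {a} = 0 := by
  have := right_nhdsWithin_Ioo_neBot ha
  have hlim : Tendsto (fun x => ENNReal.ofReal (Q a) - ENNReal.ofReal (Q x))
      (𝓝[Set.Ioo 0 a] a) (𝓝 0) := by
    have hQ : Tendsto Q (𝓝[Set.Ioo 0 a] a) (𝓝 (Q a)) :=
      hQa.tendsto.mono_left (nhdsWithin_mono _ fun x hx => ⟨hx.1.le, hx.2.le.trans ha1⟩)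
    simpa using ENNReal.Tendsto.sub (tendsto_const_nhds (x := ENNReal.ofReal (Q a)))
      (ENNReal.continuous_ofReal.tendsto _ |>.comp hQ) (Or.inl ENNReal.ofReal_ne_top)
  refine le_antisymm (ge_of_tendsto hlim ?_) bot_le
  filter_upwards [self_mem_nhdsWithin] with x hx
  rw [← measure_Ioc_eq_ofReal_sub_ofReal hdist hx.1.le hx.2.le ha1]
  exact measure_mono fun y hy => ⟨hy ▸ hx.2, hy.le⟩

theorem measure_Icc_eq_ofReal_sub_ofReal
    (hdist : ∀ x ∈ Set.Icc (0 : ℝ) 1, μ (Set.Icc 0 x) = ENNReal.ofReal (Q x))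
    (hQ : ContinuousOn Q (Set.Icc 0 1)) {a b : ℝ} (ha : 0 < a) (hab : a ≤ b) (hb : b ≤ 1) :
    μ (Set.Icc a b) = ENNReal.ofReal (Q b) - ENNReal.ofReal (Q a) := by
  have hatom := measure_singleton_eq_zero_of_continuousWithinAt hdist
    (hQ a ⟨ha.le, hab.trans hb⟩) ha (hab.trans hb)
  rw [← measure_congr (Ioc_ae_eq_Icc' hatom), measure_Ioc_eq_ofReal_sub_ofReal hdist ha.le hab hb]

end Cdf

theorem interval_Iqk_length_and_measure_general
    (μ : Measure ℝ)
    (Q : ℝ → ℝ)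
    (hQcont : ContinuousOn Q (Set.Icc 0 1))
    (hQ1 : Q 1 = 1)
    (hQM1 : ∀ x ∈ Set.Icc (0 : ℝ) 1, Q (x / (1 + x)) = Q x / 2)
    (hQM2 : ∀ x ∈ Set.Icc (0 : ℝ) 1, Q (1 / (2 - x)) = (Q x + 1) / 2)
    (hdist : ∀ x ∈ Set.Icc (0 : ℝ) 1, μ (Set.Icc 0 x) = ENNReal.ofReal (Q x))
    (q k : ℕ) (hq : 2 ≤ q)
    (l : ℕ → ℕ → ℝ) (hl : ∀ q' k' : ℕ, l q' k' = 1 / (q' * ((q' : ℝ) * k' + q' - 1))) :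
    (1 / (q : ℝ) + l q k) - (1 / (q : ℝ) + l q (k + 1)) =
        l q k - l q (k + 1) ∧
    l q k - l q (k + 1) = (q : ℝ) ^ 2 * l q k * l q (k + 1) ∧
    μ (Set.Icc (1 / (q : ℝ) + l q (k + 1)) (1 / (q : ℝ) + l q k)) =
      (1 / 2 : ℝ≥0∞) ^ (q + k) := by
  obtain rfl : l = ell := funext₂ hl
  refine ⟨by ring, ell_sub_ell_succ hq k, ?_⟩
  have hb : 1 / (q : ℝ) + ell q k ≤ 1 := by
    rw [one_div_add_ell hq]
    exact (natCast_add_one_div_mem_Icc hq k).2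
  have ha : 0 < 1 / (q : ℝ) + ell q (k + 1) := add_pos (by positivity) (ell_pos hq (k + 1))
  rw [measure_Icc_eq_ofReal_sub_ofReal hdist hQcont ha (by gcongr; exact ell_succ_le hq k) hb,
    one_div_add_ell hq, one_div_add_ell hq,
    questionMark_div_natCast hQ1 hQM1 hQM2 hq, questionMark_div_natCast hQ1 hQM1 hQM2 hq,
    ← ENNReal.ofReal_sub _ (by positivity)]
  rw [show (2 : ℝ) * (1 / 2) ^ q * (1 + (1 / 2) ^ k) - 2 * (1 / 2) ^ q * (1 + (1 / 2) ^ (k + 1))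
      = (1 / 2) ^ (q + k) by ring, ENNReal.ofReal_pow (by norm_num)]
  simp

/-- For integers `q ≥ 2` and `k ≥ 0`, setting `l_{q,k} = 1/(q(qk+q-1))`, the
interval `I_{q,k} = [1/q + l_{q,k+1}, 1/q + l_{q,k}]` has length
`l_{q,k} - l_{q,k+1} = q² l_{q,k} l_{q,k+1}`, and its measure under
Minkowski's question mark measure `μ` is `2^{-q-k}`. -/
theorem interval_Iqk_length_and_measure
    (μ : Measure ℝ) [IsProbabilityMeasure μ] (hμsupp : μ (Set.Icc (0 : ℝ) 1) = 1)
    (Q : ℝ → ℝ)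
    (hQcont : ContinuousOn Q (Set.Icc 0 1)) (hQmono : MonotoneOn Q (Set.Icc 0 1))
    (hQ0 : Q 0 = 0) (hQ1 : Q 1 = 1)
    (hQM1 : ∀ x ∈ Set.Icc (0 : ℝ) 1, Q (x / (1 + x)) = Q x / 2)
    (hQM2 : ∀ x ∈ Set.Icc (0 : ℝ) 1, Q (1 / (2 - x)) = (Q x + 1) / 2)
    (hdist : ∀ x ∈ Set.Icc (0 : ℝ) 1, μ (Set.Icc 0 x) = ENNReal.ofReal (Q x))
    (q k : ℕ) (hq : 2 ≤ q)
    (l : ℕ → ℕ → ℝ) (hl : ∀ q' k' : ℕ, l q' k' = 1 / (q' * ((q' : ℝ) * k' + q' - 1))) :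
    (1 / (q : ℝ) + l q k) - (1 / (q : ℝ) + l q (k + 1)) =
        l q k - l q (k + 1) ∧
    l q k - l q (k + 1) = (q : ℝ) ^ 2 * l q k * l q (k + 1) ∧
    μ (Set.Icc (1 / (q : ℝ) + l q (k + 1)) (1 / (q : ℝ) + l q k)) =
      (1 / 2 : ℝ≥0∞) ^ (q + k) :=
  interval_Iqk_length_and_measure_general μ Q hQcont hQ1 hQM1 hQM2 hdist q k hq l hl
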